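/- For any r-covector ξ and s-covector η on an n-dimensional inner product space E, the norm of the exterior product satisfies ‖ξ ∧ η‖ ≤ C(r+s, r) · ‖ξ‖ · ‖η‖, where C(r+s, r) is the binomial coefficient and ‖·‖ is the norm induced by the inner product on covectors. -/
import Mathlib


open MeasureTheory
open scoped BigOperators

noncomputable section

abbrev Euc (n : ℕ) := EuclideanSpace ℝ (Fin n)

abbrev Cov (n : ℕ) := Finset (Fin n) → ℝ

/-- Sign of the shuffle merging `t` and `u`. -/
def eps {n : ℕ} (t u : Finset (Fin n)) : ℝ :=
  (-1 : ℝ) ^ (((t ×ˢ u).filter fun p => p.2 < p.1).card)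

/-- Exterior (wedge) product of covectors in coordinates. -/
def wedge {n : ℕ} (ξ η : Cov n) : Cov n :=
  fun s => ∑ t ∈ s.powerset, eps t (s \ t) * ξ t * η (s \ t)

/-- Hodge star in coordinates. -/
def hodge {n : ℕ} (ξ : Cov n) : Cov n := fun s => eps sᶜ s * ξ sᶜ

/-- Inner product of covectors, making the basic covectors orthonormal. -/
def covInner {n : ℕ} (ξ η : Cov n) : ℝ := ∑ s : Finset (Fin n), ξ s * η s

def covNorm {n : ℕ} (ξ : Cov n) : ℝ := Real.sqrt (covInner ξ ξ)

/-- `ξ` is a covector of pure degree `r`. -/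
def IsDeg {n : ℕ} (r : ℕ) (ξ : Cov n) : Prop := ∀ s, ξ s ≠ 0 → s.card = r

abbrev Form (n : ℕ) := Euc n → Cov n

/-- Exterior derivative in coordinates. -/
def extD {n : ℕ} (u : Form n) : Form n :=
  fun x s => ∑ i ∈ s, eps {i} (s.erase i) *
    fderiv ℝ (fun y => u y (s.erase i)) x (EuclideanSpace.single i (1 : ℝ))

def hodgeF {n : ℕ} (u : Form n) : Form n := fun x => hodge (u x)

/-- Codifferential `δu = (-1)^{nr+r+1} ∗d∗u` of an `r`-form. -/
def codiff {n : ℕ} (r : ℕ) (u : Form n) : Form n :=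
  fun x => ((-1 : ℝ) ^ (n * r + r + 1)) • hodge (extD (hodgeF u) x)

/-- All coefficients of `u` are of class `C^k` on `O`. -/
def FormClass {n : ℕ} (k : ℕ∞) (O : Set (Euc n)) (u : Form n) : Prop :=
  ∀ s, ContDiffOn ℝ k (fun x => u x s) O

lemma eps_sq {n : ℕ} (t u : Finset (Fin n)) : eps t u ^ 2 = 1 := by
  unfold eps
  rw [← pow_mul, mul_comm, pow_mul, neg_one_sq, one_pow]

lemma covInner_self_nonneg {n : ℕ} (ξ : Cov n) : 0 ≤ covInner ξ ξ :=
  Finset.sum_nonneg fun s _ => mul_self_nonneg _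

lemma double_sum {n : ℕ} (F : Finset (Fin n) → Finset (Fin n) → ℝ) :
    ∑ S : Finset (Fin n), ∑ t ∈ S.powerset, F t (S \ t)
      = ∑ t : Finset (Fin n), ∑ u ∈ tᶜ.powerset, F t u := by
  rw [Finset.sum_sigma', Finset.sum_sigma']
  refine Finset.sum_nbij' (fun p => ⟨p.2, p.1 \ p.2⟩) (fun p => ⟨p.1 ∪ p.2, p.1⟩)
    ?_ ?_ ?_ ?_ ?_
  · rintro ⟨S, t⟩ h
    simp only [Finset.mem_sigma, Finset.mem_powerset, Finset.mem_univ, true_and] at h ⊢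
    intro x hx
    simp only [Finset.mem_sdiff] at hx
    simp [hx.2]
  · rintro ⟨t, u⟩ h
    simp only [Finset.mem_sigma, Finset.mem_powerset, Finset.mem_univ, true_and] at h ⊢
    exact Finset.subset_union_left
  · rintro ⟨S, t⟩ h
    simp only [Finset.mem_sigma, Finset.mem_powerset, Finset.mem_univ, true_and] at h
    simp [Finset.union_sdiff_of_subset h]
  · rintro ⟨t, u⟩ h
    simp only [Finset.mem_sigma, Finset.mem_powerset, Finset.mem_univ, true_and] at h
    have hd : Disjoint t u := by
      rw [Finset.disjoint_left]
      intro x hxt hxu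
      have := h hxu
      simp [hxt] at this
    simp [Finset.union_sdiff_cancel_left hd]
  · rintro ⟨S, t⟩ h
    rfl

lemma key {n r s : ℕ} (ξ η : Cov n) (hξ : IsDeg r ξ) (hη : IsDeg s η) (S : Finset (Fin n)) :
    (wedge ξ η S) ^ 2 ≤ ((r + s).choose r : ℝ) * ∑ t ∈ S.powerset, (ξ t * η (S \ t)) ^ 2 := by
  classical
  set T := S.powerset.filter (fun t => ξ t ≠ 0 ∧ η (S \ t) ≠ 0) with hT
  have hw : wedge ξ η S = ∑ t ∈ T, eps t (S \ t) * ξ t * η (S \ t) := by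
    rw [wedge, hT, Finset.sum_filter_of_ne]
    intro t _ hne
    constructor
    · intro h0; apply hne; rw [h0]; ring
    · intro h0; apply hne; rw [h0]; ring
  have hCS : (∑ t ∈ T, eps t (S \ t) * ξ t * η (S \ t)) ^ 2
      ≤ (T.card : ℝ) * ∑ t ∈ T, (ξ t * η (S \ t)) ^ 2 := by
    calc (∑ t ∈ T, eps t (S \ t) * ξ t * η (S \ t)) ^ 2
        = (∑ t ∈ T, (1 : ℝ) * (eps t (S \ t) * ξ t * η (S \ t))) ^ 2 := by
          simp
      _ ≤ (∑ t ∈ T, (1 : ℝ) ^ 2) * ∑ t ∈ T, (eps t (S \ t) * ξ t * η (S \ t)) ^ 2 :=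
          Finset.sum_mul_sq_le_sq_mul_sq _ _ _
      _ = (T.card : ℝ) * ∑ t ∈ T, (ξ t * η (S \ t)) ^ 2 := by
          congr 1
          · simp
          · apply Finset.sum_congr rfl
            intro t _
            rw [mul_assoc, mul_pow, eps_sq, one_mul]
  have hsum_nonneg : (0 : ℝ) ≤ ∑ t ∈ S.powerset, (ξ t * η (S \ t)) ^ 2 :=
    Finset.sum_nonneg fun t _ => sq_nonneg _
  rcases T.eq_empty_or_nonempty with hTe | hTne
  · rw [hw, hTe]
    simpa using mul_nonneg (by positivity) hsum_nonneg
  · obtain ⟨t0, ht0⟩ := hTne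
    rw [hT, Finset.mem_filter, Finset.mem_powerset] at ht0
    have hcard : S.card = r + s := by
      have hle := Finset.card_le_card ht0.1
      have h1 := hξ t0 ht0.2.1
      have h2 := hη (S \ t0) ht0.2.2
      rw [Finset.card_sdiff_of_subset ht0.1] at h2
      omega
    have hTsub : T ⊆ S.powersetCard r := by
      intro t ht
      rw [hT, Finset.mem_filter, Finset.mem_powerset] at ht
      rw [Finset.mem_powersetCard]
      exact ⟨ht.1, hξ t ht.2.1⟩
    have hTcard : (T.card : ℝ) ≤ ((r + s).choose r : ℝ) := by
      have := Finset.card_le_card hTsub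
      rw [Finset.card_powersetCard, hcard] at this
      exact_mod_cast this
    have hsub : ∑ t ∈ T, (ξ t * η (S \ t)) ^ 2 ≤ ∑ t ∈ S.powerset, (ξ t * η (S \ t)) ^ 2 :=
      Finset.sum_le_sum_of_subset_of_nonneg (Finset.filter_subset _ _)
        (fun t _ _ => sq_nonneg _)
    have h1 : (0 : ℝ) ≤ ∑ t ∈ T, (ξ t * η (S \ t)) ^ 2 :=
      Finset.sum_nonneg fun t _ => sq_nonneg _
    calc (wedge ξ η S) ^ 2 ≤ (T.card : ℝ) * ∑ t ∈ T, (ξ t * η (S \ t)) ^ 2 := by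
          rw [hw]; exact hCS
      _ ≤ ((r + s).choose r : ℝ) * ∑ t ∈ S.powerset, (ξ t * η (S \ t)) ^ 2 := by
          apply mul_le_mul hTcard hsub h1 (by positivity)

/-- `‖ξ ∧ η‖ ≤ C(r+s, r) ‖ξ‖ ‖η‖` for an `r`-covector `ξ` and an
`s`-covector `η`. -/
theorem stmt3 {n r s : ℕ} (ξ η : Cov n) (hξ : IsDeg r ξ) (hη : IsDeg s η) :
    covNorm (wedge ξ η) ≤ (Nat.choose (r + s) r : ℝ) * covNorm ξ * covNorm η := by
  set C : ℝ := ((r + s).choose r : ℝ) with hC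
  have hC1 : (1 : ℝ) ≤ C := by
    have h0 : 1 ≤ (r + s).choose r := Nat.choose_pos (Nat.le_add_right r s)
    rw [hC]
    exact_mod_cast h0
  have hA := covInner_self_nonneg ξ
  have hB := covInner_self_nonneg η
  have hmain : covInner (wedge ξ η) (wedge ξ η) ≤ C * (covInner ξ ξ * covInner η η) := by
    have step1 : covInner (wedge ξ η) (wedge ξ η)
        ≤ ∑ S : Finset (Fin n), C * ∑ t ∈ S.powerset, (ξ t * η (S \ t)) ^ 2 := by
      rw [covInner]
      apply Finset.sum_le_sum
      intro S _
      rw [← sq]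
      exact key ξ η hξ hη S
    rw [← Finset.mul_sum] at step1
    have step2 : ∑ S : Finset (Fin n), ∑ t ∈ S.powerset, (ξ t * η (S \ t)) ^ 2
        ≤ covInner ξ ξ * covInner η η := by
      rw [double_sum (fun t u => (ξ t * η u) ^ 2)]
      calc ∑ t : Finset (Fin n), ∑ u ∈ tᶜ.powerset, (ξ t * η u) ^ 2
          ≤ ∑ t : Finset (Fin n), ∑ u : Finset (Fin n), (ξ t * η u) ^ 2 := by
            apply Finset.sum_le_sum
            intro t _
            exact Finset.sum_le_sum_of_subset_of_nonneg (Finset.subset_univ _)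
              (fun u _ _ => sq_nonneg _)
        _ = covInner ξ ξ * covInner η η := by
            rw [covInner, covInner, Finset.sum_mul_sum]
            apply Finset.sum_congr rfl; intro t _
            apply Finset.sum_congr rfl; intro u _
            ring
    calc covInner (wedge ξ η) (wedge ξ η)
        ≤ C * ∑ S : Finset (Fin n), ∑ t ∈ S.powerset, (ξ t * η (S \ t)) ^ 2 := step1
      _ ≤ C * (covInner ξ ξ * covInner η η) := by
          apply mul_le_mul_of_nonneg_left step2 (by linarith)
  have hsqrtC : Real.sqrt C ≤ C := by
    nlinarith [Real.sq_sqrt (by linarith : (0:ℝ) ≤ C), Real.sqrt_nonneg C]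
  calc covNorm (wedge ξ η) = Real.sqrt (covInner (wedge ξ η) (wedge ξ η)) := rfl
    _ ≤ Real.sqrt (C * (covInner ξ ξ * covInner η η)) := Real.sqrt_le_sqrt hmain
    _ = Real.sqrt C * (Real.sqrt (covInner ξ ξ) * Real.sqrt (covInner η η)) := by
        rw [Real.sqrt_mul (by linarith), Real.sqrt_mul hA]
    _ ≤ C * (Real.sqrt (covInner ξ ξ) * Real.sqrt (covInner η η)) := by
        apply mul_le_mul_of_nonneg_right hsqrtC
        positivity
    _ = C * covNorm ξ * covNorm η := by rw [covNorm, covNorm]; ring
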